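/- arXiv:1302.7309 — 2 statements merged into one kernel-verified Lean document; each statement's English description precedes it below -/
import Mathlib

section
/- Euler integral representation of Kummer's function: if Re(b) > Re(a) > 0, then M(a,b,z) = (Γ(b)/(Γ(a)Γ(b−a))) ∫₀¹ e^{zu} u^{a−1} (1−u)^{b−a−1} du. -/
/-- The Pochhammer symbol (rising factorial) for complex arguments. -/
noncomputable def risingC (a : ℂ) (n : ℕ) : ℂ := ∏ i ∈ Finset.range n, (a + i)

/-- Kummer's confluent hypergeometric function of the first kind. -/
noncomputable def kummerM (a b z : ℂ) : ℂ :=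
  ∑' n : ℕ, risingC a n / (risingC b n * n.factorial) * z ^ n

/-!
Expand `e^{zu}` in its power series and integrate term by term, which dominated convergence
justifies with the bound `‖z‖ⁿ/n! · ‖u^{a-1}(1-u)^{b-a-1}‖`. The `n`-th term is
`zⁿ/n! · B(a+n, b-a)`, and `B(a+n, b-a) = Γ(a)Γ(b-a)/Γ(b) · (a)ₙ/(b)ₙ` by `Γ(s+n) = Γ(s)(s)ₙ`.
-/

open MeasureTheory Complex Set Nat

lemma ne_neg_natCast_of_re_pos {a : ℂ} (ha : 0 < a.re) (k : ℕ) : a ≠ -k := by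
  rintro rfl
  simp only [neg_re, natCast_re, Left.neg_pos_iff] at ha
  exact (k.cast_nonneg.not_gt ha).elim

lemma risingC_eq_ascPochhammer_eval (a : ℂ) (n : ℕ) :
    risingC a n = (ascPochhammer ℂ n).eval a := by
  induction n with
  | zero => simp [risingC]
  | succ n ih => simp [risingC, Finset.prod_range_succ, ascPochhammer_succ_right, ← ih]

lemma risingC_ne_zero {a : ℂ} (ha : ∀ k : ℕ, a ≠ -k) (n : ℕ) : risingC a n ≠ 0 := by
  rw [risingC_eq_ascPochhammer_eval, Ne, ascPochhammer_eval_eq_zero_iff]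
  rintro ⟨k, -, hk⟩
  exact ha k (by rw [hk, neg_neg])

lemma Gamma_add_nat_eq_Gamma_mul_risingC {a : ℂ} (ha : ∀ k : ℕ, a ≠ -k) (n : ℕ) :
    Gamma (a + n) = Gamma a * risingC a n := by
  rw [risingC_eq_ascPochhammer_eval, ← Gamma_add_nat_div_Gamma_eq a ha,
    mul_div_cancel₀ _ (Gamma_ne_zero ha)]

lemma betaIntegral_add_nat {a c : ℂ} (ha : 0 < a.re) (hc : 0 < c.re) (n : ℕ) :
    betaIntegral (a + n) c =
      Gamma a * Gamma c / Gamma (a + c) * (risingC a n / risingC (a + c) n) := by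
  have hac : 0 < (a + c).re := by rw [add_re]; positivity
  have han : 0 < (a + n).re := by rw [add_re, natCast_re]; positivity
  have h := Gamma_mul_Gamma_eq_betaIntegral han hc
  rw [add_right_comm, Gamma_add_nat_eq_Gamma_mul_risingC (ne_neg_natCast_of_re_pos ha),
    Gamma_add_nat_eq_Gamma_mul_risingC (ne_neg_natCast_of_re_pos hac)] at h
  have := Gamma_ne_zero_of_re_pos hac
  have := risingC_ne_zero (ne_neg_natCast_of_re_pos hac) n
  field_simp
  linear_combination -h

lemma integral_pow_mul_eq_betaIntegral_add_nat (a b : ℂ) (n : ℕ) :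
    ∫ u in (0 : ℝ)..1, (u : ℂ) ^ n * ((u : ℂ) ^ (a - 1) * (1 - (u : ℂ)) ^ (b - 1)) =
      betaIntegral (a + n) b := by
  rw [betaIntegral]
  refine intervalIntegral.integral_congr_ae ?_
  filter_upwards [Measure.ae_ne volume 0] with u hu _
  have hu : (u : ℂ) ≠ 0 := by exact_mod_cast hu
  rw [← mul_assoc, ← cpow_natCast, ← cpow_add _ _ hu]
  ring_nf

lemma hasSum_intervalIntegral_exp_mul (z : ℂ) {f : ℝ → ℂ}
    (hf : IntervalIntegrable f volume 0 1) :
    HasSum (fun n : ℕ => z ^ n / n ! * ∫ u in (0 : ℝ)..1, (u : ℂ) ^ n * f u)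
      (∫ u in (0 : ℝ)..1, exp (z * u) * f u) := by
  simp_rw [← intervalIntegral.integral_const_mul]
  refine intervalIntegral.hasSum_integral_of_dominated_convergence
    (fun n u => ‖z‖ ^ n / n ! * ‖f u‖) (fun n => ?_) (fun n => ?_) ?_ ?_ ?_
  · exact (continuous_ofReal.pow n).aestronglyMeasurable.mul hf.def'.1 |>.const_mul _
  · refine .of_forall fun u hu => ?_
    rw [uIoc_of_le zero_le_one] at hu
    have hu_pow : ‖(u : ℂ) ^ n‖ ≤ 1 := by
      rw [norm_pow, norm_real, Real.norm_of_nonneg hu.1.le]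
      exact pow_le_one₀ hu.1.le hu.2
    rw [norm_mul, norm_mul, norm_div, norm_pow, norm_natCast]
    gcongr
    exact mul_le_of_le_one_left (norm_nonneg _) hu_pow
  · exact .of_forall fun u _ => (Real.summable_pow_div_factorial ‖z‖).mul_right _
  · simp_rw [tsum_mul_right]
    exact hf.norm.const_mul _
  · refine .of_forall fun u _ => ?_
    have h := (NormedSpace.expSeries_div_hasSum_exp (z * u)).mul_right (f u)
    rw [← exp_eq_exp_ℂ] at h
    exact h.congr_fun fun n => by ring

/-- Euler integral representation: if `Re(b) > Re(a) > 0`, then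
`M(a,b,z) = (Γ(b)/(Γ(a)Γ(b−a))) ∫₀¹ e^{zu} u^{a−1} (1−u)^{b−a−1} du`. -/
theorem kummer_euler_integral (a b z : ℂ) (ha : 0 < a.re) (hab : a.re < b.re) :
    kummerM a b z = Complex.Gamma b / (Complex.Gamma a * Complex.Gamma (b - a)) *
      ∫ u in (0 : ℝ)..1, Complex.exp (z * u) * (u : ℂ) ^ (a - 1) * ((1 : ℂ) - u) ^ (b - a - 1) := by
  have hc : 0 < (b - a).re := by rw [sub_re]; linarith
  have hb : 0 < b.re := ha.trans hab
  have hseries := hasSum_intervalIntegral_exp_mul z (betaIntegral_convergent ha hc)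
  simp_rw [integral_pow_mul_eq_betaIntegral_add_nat, betaIntegral_add_nat ha hc,
    add_sub_cancel] at hseries
  simp_rw [mul_assoc (cexp _), kummerM, ← (hseries.mul_left _).tsum_eq]
  refine tsum_congr fun n => ?_
  have := Gamma_ne_zero_of_re_pos ha
  have := Gamma_ne_zero_of_re_pos hb
  have := Gamma_ne_zero_of_re_pos hc
  have := risingC_ne_zero (ne_neg_natCast_of_re_pos hb) n
  field_simp
end

section
/- Second addition theorem for Kummer's function: M(a,b,x+y) = e^y Σ_{n≥0} ((b−a)_n (−y)^n)/((b)_n n!) · M(a, b+n, x) for all complex x, y when b is not a nonpositive integer. -/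
open Finset
open scoped Nat

lemma risingC_zero (a : ℂ) : risingC a 0 = 1 := prod_range_zero _

lemma risingC_add (a : ℂ) (m n : ℕ) : risingC a (m + n) = risingC a m * risingC (a + m) n := by
  rw [risingC, prod_range_add, risingC, risingC]
  congr 1
  exact prod_congr rfl fun i _ => by push_cast; ring

lemma risingC_ne_zero_s6 {b : ℂ} (hb : ∀ n : ℕ, b ≠ -n) (N : ℕ) : risingC b N ≠ 0 :=
  prod_ne_zero_iff.mpr fun i _ h => hb i (eq_neg_of_add_eq_zero_left h)

section ChuVandermonde

open Polynomial

lemma descPochhammer_smeval_eq_prod_range {R : Type*} [CommRing R] (n : ℕ) (r : R) :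
    (descPochhammer ℤ n).smeval r = ∏ i ∈ range n, (r - i) := by
  rw [← aeval_eq_smeval, aeval_def, eval₂_eq_eval_map, descPochhammer_map,
    descPochhammer_eval_eq_prod_range]

lemma risingC_eq_descPochhammer_smeval (z : ℂ) (n : ℕ) :
    risingC z n = (descPochhammer ℤ n).smeval (z + n - 1) := by
  rw [descPochhammer_smeval_eq_prod_range, risingC, ← prod_range_reflect]
  refine prod_congr rfl fun i hi => ?_
  rw [Nat.sub_sub, Nat.cast_sub (by simp at hi; omega)]
  push_cast; ring

lemma neg_one_pow_mul_risingC (u : ℂ) (n : ℕ) :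
    (-1) ^ n * risingC u n = (descPochhammer ℤ n).smeval (-u) := by
  rw [descPochhammer_smeval_eq_prod_range, risingC, ← card_range n, ← prod_const,
    card_range, ← prod_mul_distrib]
  exact prod_congr rfl fun i _ => by ring

theorem sum_antidiagonal_choose_mul_risingC (u c : ℂ) (j : ℕ) :
    ∑ p ∈ antidiagonal j, (-1) ^ p.1 * (j.choose p.1 : ℂ) * risingC u p.1 * risingC (c + p.1) p.2
      = risingC (c - u) j := by
  rw [risingC_eq_descPochhammer_smeval, show c - u + j - 1 = -u + (c + j - 1) by ring,
    Ring.descPochhammer_smeval_add _ (Commute.all _ _)]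
  refine sum_congr rfl fun p hp => ?_
  rw [← neg_one_pow_mul_risingC, risingC_eq_descPochhammer_smeval (c + p.1),
    ← HasAntidiagonal.mem_antidiagonal.mp hp, Nat.cast_add, ← add_assoc]
  ring

end ChuVandermonde

lemma norm_risingC_le {z : ℂ} {s : ℝ} (hz : ‖z‖ ≤ s) (n : ℕ) :
    ‖risingC z n‖ ≤ ∏ i ∈ range n, (s + i) := by
  rw [risingC, norm_prod]
  gcongr with i
  exact (norm_add_le _ _).trans (by simpa using hz)

lemma prod_range_mul_prod_range_le {s : ℝ} (hs : 0 ≤ s) (m n : ℕ) :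
    (∏ i ∈ range m, (s + i)) * ∏ i ∈ range n, (s + i) ≤ ∏ i ∈ range (m + n), (s + i) := by
  rw [prod_range_add]
  gcongr
  linarith [(m.cast_nonneg : (0 : ℝ) ≤ m)]

lemma exists_prod_range_le_mul_norm_risingC {s : ℝ} (hs : 0 ≤ s) {b : ℂ}
    (hb : ∀ n : ℕ, b ≠ -n) : ∃ C, ∀ N, ∏ i ∈ range N, (s + i) ≤ C * (2 ^ N * ‖risingC b N‖) := by
  have hbN (N : ℕ) : 0 < 2 ^ N * ‖risingC b N‖ := by
    have := norm_pos_iff.2 (risingC_ne_zero_s6 hb N); positivity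
  let r (N : ℕ) : ℝ := (∏ i ∈ range N, (s + i)) / (2 ^ N * ‖risingC b N‖)
  have hr (N : ℕ) : 0 ≤ r N := by positivity
  obtain ⟨N₀, hN₀⟩ : ∃ N₀ : ℕ, ∀ N ≥ N₀, s + N ≤ 2 * ‖b + N‖ := by
    refine ⟨⌈s + 2 * ‖b‖⌉₊, fun N hN => ?_⟩
    have hN' : s + 2 * ‖b‖ ≤ N := (Nat.le_ceil _).trans (by exact_mod_cast hN)
    have hnorm : (N : ℝ) - ‖b‖ ≤ ‖b + N‖ := by
      simpa [add_comm] using norm_sub_norm_le (N : ℂ) (-b)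
    linarith
  refine ⟨∑ M ∈ range (N₀ + 1), r M, fun N => ?_⟩
  rw [← div_le_iff₀ (hbN N)]
  induction N with
  | zero => exact single_le_sum (fun M _ => hr M) (by simp)
  | succ N ih =>
    rcases le_or_gt (N + 1) N₀ with h | h
    · exact single_le_sum (fun M _ => hr M) (mem_range.2 (by omega))
    have hbN' : 0 < ‖b + N‖ := norm_pos_iff.2 fun h => hb N (eq_neg_of_add_eq_zero_left h)
    calc r (N + 1) = r N * ((s + N) / (2 * ‖b + N‖)) := by
          simp only [r, risingC, prod_range_succ, norm_mul, pow_succ]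
          field_simp
      _ ≤ r N * 1 := by
          gcongr
          exact (div_le_one (by positivity)).2 (hN₀ N (by omega))
      _ ≤ _ := by simpa using ih

lemma exists_norm_risingC_mul_div_le (u v : ℂ) {b : ℂ} (hb : ∀ n : ℕ, b ≠ -n) :
    ∃ C, ∀ m n, ‖risingC u m * risingC v n / risingC b (m + n)‖ ≤ C * 2 ^ (m + n) := by
  set s := max ‖u‖ ‖v‖
  obtain ⟨C, hC⟩ := exists_prod_range_le_mul_norm_risingC (by positivity : 0 ≤ s) hb
  refine ⟨C, fun m n => ?_⟩
  rw [norm_div, norm_mul, div_le_iff₀ (norm_pos_iff.2 (risingC_ne_zero_s6 hb _)), mul_assoc]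
  calc ‖risingC u m‖ * ‖risingC v n‖
      ≤ (∏ i ∈ range m, (s + i)) * ∏ i ∈ range n, (s + i) := by
        gcongr
        exacts [norm_risingC_le (le_max_left _ _) m, norm_risingC_le (le_max_right _ _) n]
    _ ≤ ∏ i ∈ range (m + n), (s + i) := prod_range_mul_prod_range_le (by positivity) m n
    _ ≤ _ := hC _

lemma summable_norm_of_norm_le_pow_mul {f : ℕ × ℕ → ℂ} {C R : ℝ} (X Y : ℂ)
    (hf : ∀ m n, ‖f (m, n)‖ ≤ C * R ^ (m + n) * ‖X ^ m / m ! * (Y ^ n / n !)‖) :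
    Summable fun p => ‖f p‖ := by
  have hexp (Z : ℂ) : Summable fun n : ℕ => (|R| * ‖Z‖) ^ n / n ! :=
    Real.summable_pow_div_factorial _
  refine Summable.of_norm_bounded
    (((hexp X).mul_of_nonneg (hexp Y) (fun _ => by positivity) fun _ => by positivity).mul_left |C|)
    fun ⟨m, n⟩ => ?_
  refine (Real.norm_of_nonneg (norm_nonneg _)).trans_le ((hf m n).trans ?_)
  calc C * R ^ (m + n) * ‖X ^ m / m ! * (Y ^ n / n !)‖
      ≤ |C * R ^ (m + n) * ‖X ^ m / m ! * (Y ^ n / n !)‖| := le_abs_self _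
    _ = _ := by
      simp only [abs_mul, abs_pow, abs_div, abs_norm, Nat.abs_cast, norm_mul, norm_div, norm_pow,
        Complex.norm_natCast, mul_pow, pow_add]
      ring

theorem Summable.tsum_prod_eq_tsum_sum_antidiagonal {A α : Type*} [AddCommMonoid A]
    [HasAntidiagonal A] [AddCommMonoid α] [TopologicalSpace α] [ContinuousAdd α] [T3Space α]
    {f : A × A → α} (hf : Summable f) : ∑' p, f p = ∑' n, ∑ p ∈ antidiagonal n, f p := by
  rw [← HasAntidiagonal.sigmaAntidiagonalEquivProd.tsum_eq f]
  refine ((HasAntidiagonal.sigmaAntidiagonalEquivProd.summable_iff.2 hf).tsum_sigma'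
    fun n => (hasSum_fintype _).summable).trans ?_
  exact tsum_congr fun n => Finset.tsum_subtype (antidiagonal n) f

theorem tsum_div_factorial_mul_add_pow {c : ℕ → ℂ} {x y : ℂ}
    (h : Summable fun p : ℕ × ℕ => c (p.1 + p.2) * (x ^ p.1 / p.1 ! * (y ^ p.2 / p.2 !))) :
    ∑' n, c n / n ! * (x + y) ^ n =
      ∑' p : ℕ × ℕ, c (p.1 + p.2) * (x ^ p.1 / p.1 ! * (y ^ p.2 / p.2 !)) := by
  rw [h.tsum_prod_eq_tsum_sum_antidiagonal]
  refine tsum_congr fun n => ?_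
  rw [(Commute.all x y).add_pow', mul_sum]
  refine sum_congr rfl fun p hp => ?_
  rw [← HasAntidiagonal.mem_antidiagonal.mp hp, nsmul_eq_mul, Nat.cast_add_choose]
  have : ((p.1 + p.2)! : ℂ) ≠ 0 := Nat.cast_ne_zero.2 (Nat.factorial_ne_zero _)
  field_simp

noncomputable def kummerBinomialTerm (a b x y : ℂ) (k j : ℕ) : ℂ :=
  risingC a (k + j) / risingC b (k + j) * (x ^ k / k ! * (y ^ j / j !))

noncomputable def kummerAdditionTerm (a b x y : ℂ) (n k : ℕ) : ℂ :=
  risingC (b - a) n * risingC a k / risingC b (n + k) * ((-y) ^ n / n ! * (x ^ k / k !))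

section KummerSeries

open Function

variable {a b : ℂ}

lemma summable_kummerBinomialTerm (hb : ∀ n : ℕ, b ≠ -n) (x y : ℂ) :
    Summable (uncurry (kummerBinomialTerm a b x y)) := by
  obtain ⟨C, hC⟩ := exists_norm_risingC_mul_div_le 0 a hb
  refine .of_norm (summable_norm_of_norm_le_pow_mul (C := C) (R := 2) x y fun k j => ?_)
  have := hC 0 (k + j)
  rw [risingC_zero, one_mul, zero_add] at this
  exact (norm_mul_le _ _).trans (mul_le_mul_of_nonneg_right this (norm_nonneg _))

lemma summable_norm_kummerAdditionTerm (hb : ∀ n : ℕ, b ≠ -n) (x y : ℂ) :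
    Summable fun p => ‖uncurry (kummerAdditionTerm a b x y) p‖ := by
  obtain ⟨C, hC⟩ := exists_norm_risingC_mul_div_le (b - a) a hb
  exact summable_norm_of_norm_le_pow_mul (-y) x fun n k =>
    (norm_mul_le _ _).trans (mul_le_mul_of_nonneg_right (hC n k) (norm_nonneg _))

lemma kummerM_add_eq_tsum_tsum (hb : ∀ n : ℕ, b ≠ -n) (x y : ℂ) :
    kummerM a b (x + y) = ∑' k, ∑' j, kummerBinomialTerm a b x y k j := by
  have h := summable_kummerBinomialTerm (a := a) hb x y
  calc kummerM a b (x + y) = ∑' p, uncurry (kummerBinomialTerm a b x y) p := by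
        simp only [kummerM, ← div_div]
        exact tsum_div_factorial_mul_add_pow (c := fun N => risingC a N / risingC b N) h
    _ = _ := h.tsum_prod

lemma mul_kummerM_eq_tsum_kummerAdditionTerm (hb : ∀ n : ℕ, b ≠ -n) (x y : ℂ) (n : ℕ) :
    risingC (b - a) n * (-y) ^ n / (risingC b n * n !) * kummerM a (b + n) x =
      ∑' k, kummerAdditionTerm a b x y n k := by
  rw [kummerM, ← tsum_mul_left]
  refine tsum_congr fun k => ?_
  obtain ⟨h₁, h₂⟩ := mul_ne_zero_iff.1 (risingC_add b n k ▸ risingC_ne_zero_s6 hb (n + k))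
  rw [kummerAdditionTerm, risingC_add b n k]
  field_simp

lemma kummerAdditionTerm_mul_pow_div_factorial (hb : ∀ n : ℕ, b ≠ -n) (x y : ℂ) (k n m : ℕ) :
    kummerAdditionTerm a b x y n k * (y ^ m / m !) =
      risingC a k / risingC b (k + (n + m)) * (x ^ k / k ! * (y ^ (n + m) / (n + m)!)) *
        ((-1) ^ n * ((n + m).choose n : ℂ) * risingC (b - a) n * risingC (b + k + n) m) := by
  have hsplit : risingC b (k + (n + m)) = risingC b (n + k) * risingC (b + k + n) m := by
    rw [← add_assoc, add_comm k n, risingC_add b (n + k)]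
    congr 2
    push_cast; ring
  obtain ⟨h₁, h₂⟩ := mul_ne_zero_iff.1 (hsplit ▸ risingC_ne_zero_s6 hb (k + (n + m)))
  have : ((n + m)! : ℂ) ≠ 0 := Nat.cast_ne_zero.2 (Nat.factorial_ne_zero _)
  rw [kummerAdditionTerm, hsplit, Nat.cast_add_choose, neg_pow, pow_add]
  field_simp

lemma tsum_kummerAdditionTerm_mul_exp (hb : ∀ n : ℕ, b ≠ -n) (x y : ℂ) (k : ℕ) :
    (∑' n, kummerAdditionTerm a b x y n k) * Complex.exp y =
      ∑' j, kummerBinomialTerm a b x y k j := by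
  have hexp : Complex.exp y = ∑' m : ℕ, y ^ m / m ! :=
    congr_fun (Complex.exp_eq_exp_ℂ.trans NormedSpace.exp_eq_tsum_div) y
  rw [hexp, tsum_mul_tsum_eq_tsum_sum_antidiagonal_of_summable_norm
      (f := fun n => kummerAdditionTerm a b x y n k)
      ((summable_norm_kummerAdditionTerm hb x y).prod_symm.prod_factor k)
      (NormedSpace.norm_expSeries_div_summable y)]
  refine tsum_congr fun j => ?_
  calc _ = ∑ p ∈ antidiagonal j, risingC a k / risingC b (k + j) * (x ^ k / k ! * (y ^ j / j !)) *
          ((-1) ^ p.1 * (j.choose p.1 : ℂ) * risingC (b - a) p.1 * risingC (b + k + p.1) p.2) :=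
        sum_congr rfl fun p hp => by
          obtain rfl := HasAntidiagonal.mem_antidiagonal.mp hp
          exact kummerAdditionTerm_mul_pow_div_factorial hb x y k p.1 p.2
    _ = risingC a k / risingC b (k + j) * (x ^ k / k ! * (y ^ j / j !)) * risingC (a + k) j := by
        rw [← mul_sum, sum_antidiagonal_choose_mul_risingC, add_sub_sub_cancel, add_comm (k : ℂ)]
    _ = _ := by rw [kummerBinomialTerm, risingC_add a k j]; ring

end KummerSeries

/-- Second addition theorem for Kummer's function:
`M(a,b,x+y) = e^y Σ_{n≥0} ((b−a)_n (−y)^n)/((b)_n n!) · M(a, b+n, x)`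
whenever `b` is not a nonpositive integer. -/
theorem kummer_addition_second (a b x y : ℂ) (hb : ∀ n : ℕ, b ≠ -(n : ℂ)) :
    kummerM a b (x + y) = Complex.exp y *
      ∑' n : ℕ, risingC (b - a) n * (-y) ^ n / (risingC b n * n.factorial) *
        kummerM a (b + n) x := by
  calc kummerM a b (x + y) = ∑' k, ∑' j, kummerBinomialTerm a b x y k j :=
        kummerM_add_eq_tsum_tsum hb x y
    _ = ∑' k, (∑' n, kummerAdditionTerm a b x y n k) * Complex.exp y :=
        tsum_congr fun k => (tsum_kummerAdditionTerm_mul_exp hb x y k).symm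
    _ = Complex.exp y * ∑' n, ∑' k, kummerAdditionTerm a b x y n k := by
        rw [tsum_mul_right, (summable_norm_kummerAdditionTerm hb x y).of_norm.tsum_comm, mul_comm]
    _ = _ := by simp only [mul_kummerM_eq_tsum_kummerAdditionTerm hb]
end
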